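/- Let p ∈ (1, ∞), σ : T → [0,∞), and C > 0, and suppose that Σ_{x ∈ T} |𝒫f(x)|^p σ(x) ≤ C^p ‖𝒫f‖_{H^p}^p for every f ∈ L^p(∂T, ν). Then σ is a Carleson measure: Σ_{y ∈ T_v} σ(y) ≤ C^p ν(∂T_v) for every v ∈ T. -/

import Mathlib

open MeasureTheory
open scoped ENNReal NNReal

/-- The punctured boundary `∂T` of the tree: maps `ω : ℤ → T` with `lev (ω j) = j`
and `par (ω j) = ω (j+1)`. -/
def PBoundary {T : Type*} (par : T → T) (lev : T → ℤ) : Type _ :=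
  {ω : ℤ → T // (∀ j : ℤ, lev (ω j) = j) ∧ ∀ j : ℤ, par (ω j) = ω (j + 1)}

/-- The boundary sector `∂T_x`. -/
def sector {T : Type*} (par : T → T) (lev : T → ℤ) (x : T) : Set (PBoundary par lev) :=
  {ω : PBoundary par lev | ω.1 (lev x) = x}

/-- The σ-algebra on `∂T` generated by the sectors. -/
instance {T : Type*} (par : T → T) (lev : T → ℤ) : MeasurableSpace (PBoundary par lev) :=
  MeasurableSpace.generateFrom (Set.range (sector par lev))

/-- The flow measure `m_ν x = ν (∂T_x)` (as a real number). -/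
noncomputable def mnu {T : Type*} (par : T → T) (lev : T → ℤ)
    (ν : Measure (PBoundary par lev)) (x : T) : ℝ :=
  (ν (sector par lev x)).toReal

/-- The Poisson integral operator `𝒫 g (x) = m_ν(x)⁻¹ ∫_{∂T_x} g dν`. -/
noncomputable def poisson {T : Type*} (par : T → T) (lev : T → ℤ)
    (ν : Measure (PBoundary par lev)) (g : PBoundary par lev → ℝ) (x : T) : ℝ :=
  (mnu par lev ν x)⁻¹ * ∫ ω in sector par lev x, g ω ∂ν

/-- The sector `T_x = {y ∈ T : y lies below x}`. -/
def tsector {T : Type*} (par : T → T) (x : T) : Set T :=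
  {y : T | ∃ n : ℕ, par^[n] y = x}

/-! Test the hypothesis on `f = 1_{∂T_v}`. Its Poisson integral is
`𝒫f(x) = ν(∂T_x ∩ ∂T_v) / ν(∂T_x)`, which equals `1` on the sector `T_v` (the boundary
sector of a descendant of `v` lies in `∂T_v`), so the left-hand side dominates
`Σ_{y ∈ T_v} σ(y)`.
Since `0 ≤ 𝒫f ≤ 1` and `p ≥ 1`, the level-`k` sum in `‖𝒫f‖_{H^p}^p` is at most
`Σ_{ℓ(x) = k} ν(∂T_x ∩ ∂T_v) ≤ ν(∂T_v)`, the sectors of one level being disjoint. -/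

section

variable {T : Type*} {par : T → T} {lev : T → ℤ}

theorem measurableSet_sector (x : T) : MeasurableSet (sector par lev x) :=
  MeasurableSpace.measurableSet_generateFrom (Set.mem_range_self x)

theorem lev_iterate (hlev : ∀ x, lev (par x) = lev x + 1) (n : ℕ) (x : T) :
    lev (par^[n] x) = lev x + n := by
  induction n with
  | zero => simp
  | succ n ih => rw [Function.iterate_succ_apply', hlev, ih]; push_cast; ring

theorem PBoundary.val_add_nat (ω : PBoundary par lev) (j : ℤ) (n : ℕ) :
    ω.1 (j + n) = par^[n] (ω.1 j) := by
  induction n with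
  | zero => simp
  | succ n ih =>
    rw [Function.iterate_succ_apply', ← ih, ω.2.2, Nat.cast_succ, add_assoc]

theorem sector_subset_sector_of_mem_tsector (hlev : ∀ x, lev (par x) = lev x + 1)
    {v y : T} (hy : y ∈ tsector par v) : sector par lev y ⊆ sector par lev v := by
  obtain ⟨n, rfl⟩ := hy
  intro ω (hω : ω.1 (lev y) = y)
  show ω.1 (lev (par^[n] y)) = par^[n] y
  rw [lev_iterate hlev, PBoundary.val_add_nat, hω]

theorem disjoint_sector_of_lev_eq {x y : T} (hlev : lev x = lev y) (hne : x ≠ y) :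
    Disjoint (sector par lev x) (sector par lev y) :=
  Set.disjoint_left.mpr fun ω (hx : ω.1 (lev x) = x) (hy : ω.1 (lev y) = y) =>
    hne (hx.symm.trans (hlev ▸ hy))

theorem tsum_measure_sector_inter_le (ν : Measure (PBoundary par lev)) (k : ℤ)
    {s : Set (PBoundary par lev)} (hs : MeasurableSet s) :
    ∑' x : {x : T // lev x = k}, ν (sector par lev x.1 ∩ s) ≤ ν s := by
  calc ∑' x : {x : T // lev x = k}, ν (sector par lev x.1 ∩ s)
      ≤ ν (⋃ x : {x : T // lev x = k}, sector par lev x.1 ∩ s) :=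
        tsum_meas_le_meas_iUnion_of_disjoint ν (fun x => (measurableSet_sector x.1).inter hs)
          fun x y hxy => ((disjoint_sector_of_lev_eq (x.2.trans y.2.symm)
            (Subtype.val_injective.ne hxy)).mono Set.inter_subset_left Set.inter_subset_left)
    _ ≤ ν s := measure_mono (Set.iUnion_subset fun _ => Set.inter_subset_right)

theorem poisson_indicator_sector (ν : Measure (PBoundary par lev)) (v x : T) :
    poisson par lev ν ((sector par lev v).indicator 1) x
      = ν.real (sector par lev x ∩ sector par lev v) / ν.real (sector par lev x) := by
  rw [poisson, setIntegral_indicator (measurableSet_sector v)]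
  simp [mnu, Measure.real, div_eq_inv_mul]

theorem poisson_indicator_sector_nonneg (ν : Measure (PBoundary par lev)) (v x : T) :
    0 ≤ poisson par lev ν ((sector par lev v).indicator 1) x := by
  rw [poisson_indicator_sector]
  exact div_nonneg measureReal_nonneg measureReal_nonneg

theorem poisson_indicator_sector_le_one {ν : Measure (PBoundary par lev)} (v : T) {x : T}
    (hx : ν (sector par lev x) ≠ ⊤) :
    poisson par lev ν ((sector par lev v).indicator 1) x ≤ 1 := by
  rw [poisson_indicator_sector]
  exact div_le_one_of_le₀ (measureReal_mono Set.inter_subset_left hx) measureReal_nonneg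

theorem poisson_indicator_sector_of_mem_tsector (hlev : ∀ x, lev (par x) = lev x + 1)
    {ν : Measure (PBoundary par lev)} {v y : T} (hy : y ∈ tsector par v)
    (hy₀ : ν (sector par lev y) ≠ 0) (hy_top : ν (sector par lev y) ≠ ⊤) :
    poisson par lev ν ((sector par lev v).indicator 1) y = 1 := by
  rw [poisson_indicator_sector, Set.inter_eq_left.mpr (sector_subset_sector_of_mem_tsector hlev hy)]
  exact div_self (ENNReal.toReal_ne_zero.mpr ⟨hy₀, hy_top⟩)

theorem ofReal_rpow_poisson_indicator_sector_mul_le {ν : Measure (PBoundary par lev)} {p : ℝ}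
    (hp : 1 ≤ p) (v : T) {x : T} (hx : ν (sector par lev x) ≠ ⊤) :
    ENNReal.ofReal (|poisson par lev ν ((sector par lev v).indicator 1) x| ^ p)
        * ν (sector par lev x) ≤ ν (sector par lev x ∩ sector par lev v) := by
  set P := poisson par lev ν ((sector par lev v).indicator 1) x with hP
  have hP₀ : 0 ≤ P := poisson_indicator_sector_nonneg ν v x
  calc ENNReal.ofReal (|P| ^ p) * ν (sector par lev x)
      ≤ ENNReal.ofReal P * ν (sector par lev x) := by
        gcongr
        rw [abs_of_nonneg hP₀]
        exact Real.rpow_le_self_of_le_one hP₀ (poisson_indicator_sector_le_one v hx) hp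
    _ = ENNReal.ofReal (P * ν.real (sector par lev x)) := by
        rw [ENNReal.ofReal_mul hP₀, ofReal_measureReal hx]
    _ ≤ ENNReal.ofReal (ν.real (sector par lev x ∩ sector par lev v)) := by
        gcongr
        rw [hP, poisson_indicator_sector]
        rcases eq_or_ne (ν.real (sector par lev x)) 0 with h | h
        · simp [h]
        · rw [div_mul_cancel₀ _ h]
    _ = ν (sector par lev x ∩ sector par lev v) :=
        ofReal_measureReal (ne_top_of_le_ne_top hx (measure_mono Set.inter_subset_left))

theorem iSup_tsum_poisson_indicator_sector_le {ν : Measure (PBoundary par lev)} {p : ℝ}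
    (hp : 1 ≤ p) (hfin : ∀ x, ν (sector par lev x) ≠ ⊤) (v : T) :
    ⨆ k : ℤ, ∑' x : {x : T // lev x = k},
        ENNReal.ofReal (|poisson par lev ν ((sector par lev v).indicator 1) x.1| ^ p)
          * ν (sector par lev x.1) ≤ ν (sector par lev v) :=
  iSup_le fun k => calc
    _ ≤ ∑' x : {x : T // lev x = k}, ν (sector par lev x.1 ∩ sector par lev v) :=
      ENNReal.tsum_le_tsum fun x => ofReal_rpow_poisson_indicator_sector_mul_le hp v (hfin x.1)
    _ ≤ ν (sector par lev v) := tsum_measure_sector_inter_le ν k (measurableSet_sector v)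

theorem tsum_tsector_le_tsum_poisson_indicator_sector (hlev : ∀ x, lev (par x) = lev x + 1)
    {ν : Measure (PBoundary par lev)} (hν₀ : ∀ x, ν (sector par lev x) ≠ 0)
    (hfin : ∀ x, ν (sector par lev x) ≠ ⊤) (σ : T → ℝ≥0∞) (p : ℝ) (v : T) :
    ∑' y : tsector par v, σ y
      ≤ ∑' x : T, ENNReal.ofReal (|poisson par lev ν ((sector par lev v).indicator 1) x| ^ p)
          * σ x :=
  calc ∑' y : tsector par v, σ y
      = ∑' y : tsector par v,
          ENNReal.ofReal (|poisson par lev ν ((sector par lev v).indicator 1) y| ^ p) * σ y :=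
        tsum_congr fun y => by
          rw [poisson_indicator_sector_of_mem_tsector hlev y.2 (hν₀ y) (hfin y), abs_one,
            Real.one_rpow, ENNReal.ofReal_one, one_mul]
    _ ≤ _ := ENNReal.tsum_comp_le_tsum_of_injective Subtype.val_injective _

end

theorem stmt14_general {T : Type*} (par : T → T) (lev : T → ℤ)
    (hlev : ∀ x : T, lev (par x) = lev x + 1)
    (ν : Measure (PBoundary par lev))
    (hν : ∀ x : T, 0 < ν (sector par lev x) ∧ ν (sector par lev x) < ⊤)
    (p : ℝ) (hp : 1 < p) (σ : T → ℝ≥0) (C : ℝ)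
    (h : ∀ f : PBoundary par lev → ℝ, MemLp f (ENNReal.ofReal p) ν →
      ∑' x : T, ENNReal.ofReal (|poisson par lev ν f x| ^ p) * (σ x : ℝ≥0∞)
        ≤ ENNReal.ofReal (C ^ p) *
            ⨆ k : ℤ, ∑' x : {x : T // lev x = k},
              ENNReal.ofReal (|poisson par lev ν f x.1| ^ p) * ν (sector par lev x.1)) :
    ∀ v : T, ∑' y : tsector par v, (σ y.1 : ℝ≥0∞)
      ≤ ENNReal.ofReal (C ^ p) * ν (sector par lev v) := by
  intro v
  have hfin : ∀ x, ν (sector par lev x) ≠ ⊤ := fun x => (hν x).2.ne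
  have hf : MemLp ((sector par lev v).indicator (1 : PBoundary par lev → ℝ))
      (ENNReal.ofReal p) ν :=
    memLp_indicator_const _ (measurableSet_sector v) 1 (Or.inr (hfin v))
  calc ∑' y : tsector par v, (σ y.1 : ℝ≥0∞)
      ≤ _ := tsum_tsector_le_tsum_poisson_indicator_sector hlev (fun x => (hν x).1.ne')
        hfin (fun x => σ x) p v
    _ ≤ _ := h _ hf
    _ ≤ ENNReal.ofReal (C ^ p) * ν (sector par lev v) := by
        gcongr
        exact iSup_tsum_poisson_indicator_sector_le hp.le hfin v

/-- If `Σ_{x ∈ T} |𝒫f(x)|^p σ(x) ≤ C^p ‖𝒫f‖_{H^p}^p` for every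
`f ∈ L^p(∂T,ν)`, then `σ` is a Carleson measure with constant `C^p`. -/
theorem stmt14 {T : Type*} [Nonempty T] (par : T → T) (lev : T → ℤ)
    (hlev : ∀ x : T, lev (par x) = lev x + 1)
    (hfin : ∀ x : T, {y : T | par y = x}.Finite)
    (hsucc : ∀ x : T, ∃ y : T, par y = x)
    (hconn : ∀ x y : T, ∃ n m : ℕ, par^[n] x = par^[m] y)
    (ν : Measure (PBoundary par lev))
    (hν : ∀ x : T, 0 < ν (sector par lev x) ∧ ν (sector par lev x) < ⊤)
    (p : ℝ) (hp : 1 < p) (σ : T → ℝ≥0) (C : ℝ) (hC : 0 < C)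
    (h : ∀ f : PBoundary par lev → ℝ, MemLp f (ENNReal.ofReal p) ν →
      ∑' x : T, ENNReal.ofReal (|poisson par lev ν f x| ^ p) * (σ x : ℝ≥0∞)
        ≤ ENNReal.ofReal (C ^ p) *
            ⨆ k : ℤ, ∑' x : {x : T // lev x = k},
              ENNReal.ofReal (|poisson par lev ν f x.1| ^ p) * ν (sector par lev x.1)) :
    ∀ v : T, ∑' y : tsector par v, (σ y.1 : ℝ≥0∞)
      ≤ ENNReal.ofReal (C ^ p) * ν (sector par lev v) :=
  stmt14_general par lev hlev ν hν p hp σ C h
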